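/- Let Σ be a finite nonempty alphabet, P a stochastic language over Σ, and let A = (ι, (T_x)_{x∈Σ}, τ) be a multiplicity automaton with finite state set Q that is a reduced representation of P. Then there exist a constant C > 0 and ρ ∈ [0,1) such that for every integer k ≥ 0 and every pair of states q, q' ∈ Q, Σ_{u∈Σ^k} |T_u(q,q')| ≤ C·ρ^k. -/

import Mathlib

open scoped BigOperators Matrix

/-- A stochastic language over the alphabet `A`: a nonnegative real-valued function on
words whose values are summable with sum `1`. -/
def IsStochastic {A : Type*} (p : List A → ℝ) : Prop :=
  (∀ w, 0 ≤ p w) ∧ HasSum p 1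

/-- The matrix associated to a word: the product of the letter matrices. -/
def wordMat {A Q : Type*} [Fintype Q] [DecidableEq Q] (T : A → Matrix Q Q ℝ)
    (w : List A) : Matrix Q Q ℝ :=
  (w.map T).prod

/-- The series computed by the multiplicity automaton `(ι, T, τ)`. -/
def maSeries {A Q : Type*} [Fintype Q] [DecidableEq Q] (ι τ : Q → ℝ)
    (T : A → Matrix Q Q ℝ) (w : List A) : ℝ :=
  ι ⬝ᵥ (wordMat T w).mulVec τ

/-- The series of state `q` of the multiplicity automaton. -/
def stateSeries {A Q : Type*} [Fintype Q] [DecidableEq Q] (τ : Q → ℝ)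
    (T : A → Matrix Q Q ℝ) (q : Q) (w : List A) : ℝ :=
  (wordMat T w).mulVec τ q

/-- `(ι, T, τ)` is a reduced representation of the stochastic language `P`. -/
def IsReducedRep {A Q : Type*} [Fintype Q] [DecidableEq Q] (ι τ : Q → ℝ)
    (T : A → Matrix Q Q ℝ) (P : List A → ℝ) : Prop :=
  maSeries ι τ T = P ∧ (∀ q, IsStochastic (stateSeries τ T q)) ∧
    LinearIndependent ℝ (stateSeries τ T)

/-!
Linear independence of the state series makes the vectors `T_w τ` span `ℝ^Q`, so every entry
`T_u(q, q')` is a fixed finite linear combination of shifted state series `u ↦ r_q(u w)`. These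
are summable, so `∑_{|u| = k} |T_u(q, q')|` tends to `0`, and hence so does
`S k = ∑_{|u| = k} ‖T_u‖` for the submultiplicative ℓ∞-operator norm. Finally `S` is itself
submultiplicative, and a submultiplicative sequence tending to `0` decays geometrically: once
`S m ≤ 1/2`, we get `S k ≤ S m ^ (k / m) * S (k % m)`.
-/

open Filter Topology

lemma tendsto_sum_ofFn_atTop_zero {A E : Type*} [Fintype A] [NormedAddCommGroup E]
    [CompleteSpace E] {p : List A → E} (hp : Summable p) :
    Tendsto (fun k => ∑ u : Fin k → A, p (List.ofFn u)) atTop (𝓝 0) := by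
  simpa [tsum_fintype] using
    (hp.comp_injective List.equivSigmaTuple.symm.injective).sigma.tendsto_atTop_zero

lemma sum_norm_prod_map_ofFn_add_le {A R : Type*} [Fintype A] [SeminormedRing R] (f : A → R)
    (k l : ℕ) :
    ∑ u : Fin (k + l) → A, ‖((List.ofFn u).map f).prod‖ ≤
      (∑ u : Fin k → A, ‖((List.ofFn u).map f).prod‖) *
        ∑ v : Fin l → A, ‖((List.ofFn v).map f).prod‖ := by
  rw [Finset.sum_mul_sum, ← Fintype.sum_prod_type', ← (Fin.appendEquiv k l).sum_comp]
  refine Finset.sum_le_sum fun uv _ => ?_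
  change ‖((List.ofFn (Fin.append uv.1 uv.2)).map f).prod‖ ≤ _
  rw [List.ofFn_fin_append, List.map_append, List.prod_append]
  exact norm_mul_le _ _

lemma le_pow_mul_of_submultiplicative {S : ℕ → ℝ} (hS0 : ∀ k, 0 ≤ S k)
    (hmul : ∀ k l, S (k + l) ≤ S k * S l) (m n r : ℕ) :
    S (m * n + r) ≤ S m ^ n * S r := by
  induction n with
  | zero => simp
  | succ n ih =>
    calc S (m * (n + 1) + r) = S (m + (m * n + r)) := by ring_nf
      _ ≤ S m * S (m * n + r) := hmul _ _
      _ ≤ S m * (S m ^ n * S r) := mul_le_mul_of_nonneg_left ih (hS0 m)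
      _ = S m ^ (n + 1) * S r := by ring

lemma exists_geometric_bound_of_submultiplicative_of_tendsto_zero {S : ℕ → ℝ}
    (hS0 : ∀ k, 0 ≤ S k) (hmul : ∀ k l, S (k + l) ≤ S k * S l) (hlim : Tendsto S atTop (𝓝 0)) :
    ∃ C > 0, ∃ ρ ∈ Set.Ico (0 : ℝ) 1, ∀ k, S k ≤ C * ρ ^ k := by
  obtain ⟨m, hm, hm1⟩ := ((hlim.eventually (ge_mem_nhds one_half_pos)).and
    (eventually_ge_atTop 1)).exists
  have hm0 : 0 < m := hm1
  set C := ∑ r ∈ Finset.range m, S r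
  have hC : 0 ≤ C := Finset.sum_nonneg fun r _ => hS0 r
  set ρ : ℝ := (1 / 2) ^ (m⁻¹ : ℝ)
  have hρ0 : 0 ≤ ρ := by positivity
  have hρm : ρ ^ m = 1 / 2 := Real.rpow_inv_natCast_pow (by norm_num) hm0.ne'
  have hρ1 : ρ < 1 := Real.rpow_lt_one (by norm_num) (by norm_num) (by positivity)
  refine ⟨2 * (C + 1), by positivity, ρ, ⟨hρ0, hρ1⟩, fun k => ?_⟩
  have hrem : S (k % m) ≤ C + 1 := by
    have := Finset.single_le_sum (fun r _ => hS0 r) (Finset.mem_range.2 (Nat.mod_lt k hm0))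
    linarith
  have hpow : (1 / 2 : ℝ) ^ (k / m) ≤ 2 * ρ ^ k := by
    calc (1 / 2 : ℝ) ^ (k / m) = 2 * (ρ ^ (m * (k / m)) * ρ ^ m) := by
          rw [pow_mul, hρm]; ring
      _ ≤ 2 * (ρ ^ (m * (k / m)) * ρ ^ (k % m)) := by
          gcongr 2 * (ρ ^ _ * ?_)
          exact pow_le_pow_of_le_one hρ0 hρ1.le (Nat.mod_lt k hm0).le
      _ = 2 * ρ ^ k := by rw [← pow_add, Nat.div_add_mod]
  calc S k = S (m * (k / m) + k % m) := by rw [Nat.div_add_mod]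
    _ ≤ S m ^ (k / m) * S (k % m) := le_pow_mul_of_submultiplicative hS0 hmul _ _ _
    _ ≤ (1 / 2) ^ (k / m) * (C + 1) := by gcongr; exacts [hS0 _, hS0 _]
    _ ≤ 2 * ρ ^ k * (C + 1) := by gcongr
    _ = 2 * (C + 1) * ρ ^ k := by ring

lemma span_range_eq_top_of_linearIndependent_apply {ι Q K : Type*} [Fintype Q] [DecidableEq Q]
    [Field K] {v : ι → Q → K} (h : LinearIndependent K fun q i => v i q) :
    Submodule.span K (Set.range v) = ⊤ := by
  rw [← Submodule.dualAnnihilator_eq_bot_iff, Submodule.eq_bot_iff]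
  intro φ hφ
  have hcoef := Fintype.linearIndependent_iff.1 h (fun q => φ (Pi.single q 1)) <| by
    ext i
    have := (Submodule.mem_dualAnnihilator _).1 hφ (v i) (Submodule.subset_span ⟨i, rfl⟩)
    rw [pi_eq_sum_univ' (v i), map_sum] at this
    simpa [mul_comm] using this
  exact LinearMap.pi_ext' fun q => LinearMap.ext_ring (hcoef q)

section Automaton

variable {A Q : Type*} [Fintype Q] [DecidableEq Q] (τ : Q → ℝ) (T : A → Matrix Q Q ℝ)

lemma wordMat_append (u w : List A) : wordMat T (u ++ w) = wordMat T u * wordMat T w := by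
  simp [wordMat]

lemma exists_wordMat_apply_eq_sum_stateSeries_append
    (hspan : Submodule.span ℝ (Set.range fun w : List A => wordMat T w *ᵥ τ) = ⊤) (q' : Q) :
    ∃ c : List A →₀ ℝ, ∀ u q,
      wordMat T u q q' = c.sum fun w a => a * stateSeries τ T q (u ++ w) := by
  -- write the basis vector `e_{q'}` as `∑ c w • T_w τ` and apply `T_u`
  obtain ⟨c, hc⟩ := Finsupp.mem_span_range_iff_exists_finsupp.1
    (hspan ▸ Submodule.mem_top : Pi.single q' 1 ∈ Submodule.span ℝ _)
  refine ⟨c, fun u q => ?_⟩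
  have := congrArg (fun x => (wordMat T u *ᵥ x) q) hc
  simp only [Matrix.mulVec_single_one, Finsupp.sum, Matrix.mulVec_sum, Matrix.mulVec_smul] at this
  simp only [Finsupp.sum, stateSeries, wordMat_append, ← Matrix.mulVec_mulVec]
  simpa [Finset.sum_apply] using this.symm

lemma tendsto_sum_abs_wordMat_apply [Fintype A] (hli : LinearIndependent ℝ (stateSeries τ T))
    (hsum : ∀ q, Summable (stateSeries τ T q)) (q q' : Q) :
    Tendsto (fun k => ∑ u : Fin k → A, |wordMat T (List.ofFn u) q q'|) atTop (𝓝 0) := by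
  obtain ⟨c, hc⟩ := exists_wordMat_apply_eq_sum_stateSeries_append τ T
    (span_range_eq_top_of_linearIndependent_apply hli) q'
  have hshift : ∀ w, Tendsto
      (fun k => ∑ u : Fin k → A, |c w| * |stateSeries τ T q (List.ofFn u ++ w)|) atTop (𝓝 0) :=
    fun w => by
    simpa [Finset.mul_sum] using (tendsto_sum_ofFn_atTop_zero
      ((hsum q).comp_injective (List.append_left_injective w)).abs).const_mul |c w|
  refine squeeze_zero (fun k => Finset.sum_nonneg fun u _ => abs_nonneg _) (fun k => ?_)
    (by simpa using tendsto_finsetSum c.support fun w _ => hshift w)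
  rw [Finset.sum_comm]
  refine Finset.sum_le_sum fun u _ => ?_
  rw [hc, Finsupp.sum]
  exact (Finset.abs_sum_le_sum_abs _ _).trans_eq (by simp [abs_mul])

section LinftyOp

attribute [local instance] Matrix.linftyOpNormedAddCommGroup Matrix.linftyOpNormedRing

lemma Matrix.linfty_opNorm_le_sum_sum {m n α : Type*} [Fintype m] [Fintype n]
    [NormedAddCommGroup α] (M : Matrix m n α) :
    ‖M‖ ≤ ∑ i, ∑ j, ‖M i j‖ := by
  have : ‖M‖₊ ≤ ∑ i, ∑ j, ‖M i j‖₊ := by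
    rw [Matrix.linfty_opNNNorm_def]
    exact Finset.sup_le fun i _ =>
      Finset.single_le_sum (f := fun i => ∑ j, ‖M i j‖₊) (fun _ _ => zero_le) (Finset.mem_univ i)
  simpa using NNReal.coe_le_coe.2 this

lemma Matrix.norm_apply_le_linfty_opNorm {m n α : Type*} [Fintype m] [Fintype n]
    [NormedAddCommGroup α] (M : Matrix m n α) (i : m) (j : n) :
    ‖M i j‖ ≤ ‖M‖ := by
  have : ‖M i j‖₊ ≤ ‖M‖₊ := by
    rw [Matrix.linfty_opNNNorm_def]
    exact (Finset.single_le_sum (fun _ _ => zero_le) (Finset.mem_univ j)).trans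
      (Finset.le_sup (f := fun i => ∑ j, ‖M i j‖₊) (Finset.mem_univ i))
  exact NNReal.coe_le_coe.2 this

lemma tendsto_sum_norm_wordMat [Fintype A] (hli : LinearIndependent ℝ (stateSeries τ T))
    (hsum : ∀ q, Summable (stateSeries τ T q)) :
    Tendsto (fun k => ∑ u : Fin k → A, ‖wordMat T (List.ofFn u)‖) atTop (𝓝 0) := by
  refine squeeze_zero (fun k => Finset.sum_nonneg fun u _ => norm_nonneg _) (fun k => ?_)
    (by simpa using tendsto_finsetSum Finset.univ (fun q _ => tendsto_finsetSum Finset.univ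
      fun q' _ => tendsto_sum_abs_wordMat_apply τ T hli hsum q q'))
  calc ∑ u : Fin k → A, ‖wordMat T (List.ofFn u)‖
      ≤ ∑ u : Fin k → A, ∑ q, ∑ q', |wordMat T (List.ofFn u) q q'| :=
        Finset.sum_le_sum fun u _ => Matrix.linfty_opNorm_le_sum_sum _
    _ = ∑ q, ∑ q', ∑ u : Fin k → A, |wordMat T (List.ofFn u) q q'| := by
        rw [Finset.sum_comm]; simp_rw [Finset.sum_comm (γ := Fin k → A)]

lemma exists_geometric_bound_sum_abs_wordMat [Fintype A]
    (hli : LinearIndependent ℝ (stateSeries τ T)) (hsum : ∀ q, Summable (stateSeries τ T q)) :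
    ∃ C > (0 : ℝ), ∃ ρ ∈ Set.Ico (0 : ℝ) 1,
      ∀ (k : ℕ) (q q' : Q), ∑ u : Fin k → A, |wordMat T (List.ofFn u) q q'| ≤ C * ρ ^ k := by
  obtain ⟨C, hC, ρ, hρ, hbound⟩ := exists_geometric_bound_of_submultiplicative_of_tendsto_zero
    (S := fun k => ∑ u : Fin k → A, ‖wordMat T (List.ofFn u)‖)
    (fun k => Finset.sum_nonneg fun u _ => norm_nonneg _) (sum_norm_prod_map_ofFn_add_le T)
    (tendsto_sum_norm_wordMat τ T hli hsum)
  exact ⟨C, hC, ρ, hρ, fun k q q' =>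
    (Finset.sum_le_sum fun u _ => Matrix.norm_apply_le_linfty_opNorm _ q q').trans (hbound k)⟩

end LinftyOp

end Automaton

theorem statement9_general {A Q : Type*} [Fintype A] [Fintype Q] [DecidableEq Q]
    (P : List A → ℝ)
    (ι τ : Q → ℝ) (T : A → Matrix Q Q ℝ) (hred : IsReducedRep ι τ T P) :
    ∃ C > (0 : ℝ), ∃ ρ ∈ Set.Ico (0 : ℝ) 1,
      ∀ (k : ℕ) (q q' : Q),
        ∑ f : Fin k → A, |wordMat T (List.ofFn f) q q'| ≤ C * ρ ^ k := by
  obtain ⟨-, hstoch, hli⟩ := hred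
  exact exists_geometric_bound_sum_abs_wordMat τ T hli fun q => (hstoch q).2.summable

theorem statement9 {A Q : Type*} [Fintype A] [Nonempty A] [Fintype Q] [DecidableEq Q]
    (P : List A → ℝ) (hP : IsStochastic P)
    (ι τ : Q → ℝ) (T : A → Matrix Q Q ℝ) (hred : IsReducedRep ι τ T P) :
    ∃ C > (0 : ℝ), ∃ ρ ∈ Set.Ico (0 : ℝ) 1,
      ∀ (k : ℕ) (q q' : Q),
        ∑ f : Fin k → A, |wordMat T (List.ofFn f) q q'| ≤ C * ρ ^ k :=
  statement9_general P ι τ T hred
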